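/- arXiv:2308.03485 — 2 statements merged into one kernel-verified Lean document; each statement's English description precedes it below -/
import Mathlib

section
/- Any two maximal paths that share a vertex are equal: if l₁ and l₂ are maximal paths and some vertex occurs in both l₁ and l₂, then l₁ = l₂. Consequently, the maximal paths of the graph (the set Paths computed by the recovery procedure of the recoverable swap algorithm) are pairwise node-disjoint. -/
/-! Since every vertex has at most one successor, a chain starting at `v` that cannot be extended
at its end is determined by `v`: it is the forward orbit of `v`. Applied to the reversed relation
(at most one predecessor), the same holds for the part of a maximal path before `v`. So a maximal
path through `v` is determined by `v`. -/

/-- `l` is a path in the directed graph given by edge relation `r`: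
a nonempty list of pairwise-distinct vertices such that consecutive
elements are related by `r`. -/
def IsPath {V : Type*} (r : V → V → Prop) (l : List V) : Prop :=
  l ≠ [] ∧ l.Nodup ∧ l.Chain' r

/-- `l` is a maximal path: a path that cannot be extended at either end. -/
def IsMaxPath {V : Type*} (r : V → V → Prop) (l : List V) : Prop :=
  IsPath r l ∧
    (∀ w, ∀ h : l ≠ [], ¬ r w (l.head h)) ∧
    (∀ w, ∀ h : l ≠ [], ¬ r (l.getLast h) w)

section

variable {V : Type*} {r : V → V → Prop}

theorem List.IsChain.eq_of_cons_of_not_rel_getLast (hsucc : ∀ u v w, r u v → r u w → v = w) :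
    ∀ {v : V} {s₁ s₂ : List V}, (v :: s₁).IsChain r → (v :: s₂).IsChain r →
      (∀ w, ¬ r ((v :: s₁).getLast (List.cons_ne_nil _ _)) w) →
      (∀ w, ¬ r ((v :: s₂).getLast (List.cons_ne_nil _ _)) w) → s₁ = s₂
  | _, [], [], _, _, _, _ => rfl
  | _, [], u :: _, _, h₂, e₁, _ => absurd (List.isChain_cons_cons.1 h₂).1 (e₁ u)
  | _, u :: _, [], h₁, _, _, e₂ => absurd (List.isChain_cons_cons.1 h₁).1 (e₂ u)
  | v, u₁ :: s₁, u₂ :: s₂, h₁, h₂, e₁, e₂ => by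
    obtain ⟨hvu₁, h₁⟩ := List.isChain_cons_cons.1 h₁
    obtain ⟨hvu₂, h₂⟩ := List.isChain_cons_cons.1 h₂
    obtain rfl : u₁ = u₂ := hsucc v u₁ u₂ hvu₁ hvu₂
    rw [eq_of_cons_of_not_rel_getLast hsucc h₁ h₂ e₁ e₂]

theorem IsMaxPath.reverse {l : List V} (h : IsMaxPath r l) : IsMaxPath (flip r) l.reverse := by
  obtain ⟨⟨hne, hnd, hc⟩, hhead, hlast⟩ := h
  refine ⟨⟨List.reverse_ne_nil_iff.2 hne, List.nodup_reverse.2 hnd, List.isChain_reverse.2 hc⟩,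
    fun w h ↦ ?_, fun w h ↦ ?_⟩
  · rw [List.head_reverse]
    exact hlast w _
  · rw [List.getLast_reverse]
    exact hhead w _

theorem IsMaxPath.suffix_eq (hsucc : ∀ u v w, r u v → r u w → v = w) {v : V}
    {p₁ s₁ p₂ s₂ : List V} (h₁ : IsMaxPath r (p₁ ++ v :: s₁)) (h₂ : IsMaxPath r (p₂ ++ v :: s₂)) :
    s₁ = s₂ := by
  refine List.IsChain.eq_of_cons_of_not_rel_getLast hsucc
    (h₁.1.2.2.suffix (List.suffix_append _ _)) (h₂.1.2.2.suffix (List.suffix_append _ _))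
    (fun w hw ↦ h₁.2.2 w h₁.1.1 ?_) (fun w hw ↦ h₂.2.2 w h₂.1.1 ?_)
  · rwa [List.getLast_append_of_ne_nil _ (List.cons_ne_nil _ _)]
  · rwa [List.getLast_append_of_ne_nil _ (List.cons_ne_nil _ _)]

theorem IsMaxPath.prefix_eq (hpred : ∀ u v w, r u w → r v w → u = v) {v : V}
    {p₁ s₁ p₂ s₂ : List V} (h₁ : IsMaxPath r (p₁ ++ v :: s₁)) (h₂ : IsMaxPath r (p₂ ++ v :: s₂)) :
    p₁ = p₂ := by
  have hrev (p s : List V) : (p ++ v :: s).reverse = s.reverse ++ v :: p.reverse := by simp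
  have h₁' := h₁.reverse
  have h₂' := h₂.reverse
  rw [hrev] at h₁' h₂'
  exact List.reverse_injective
    (suffix_eq (fun u v w h h' ↦ hpred v w u h h') h₁' h₂')

end

theorem maximal_paths_disjoint_general {V : Type*} (r : V → V → Prop)
    (hsucc : ∀ u v w, r u v → r u w → v = w)
    (hpred : ∀ u v w, r u w → r v w → u = v)
    (l₁ l₂ : List V) (h₁ : IsMaxPath r l₁) (h₂ : IsMaxPath r l₂)
    (v : V) (hv₁ : v ∈ l₁) (hv₂ : v ∈ l₂) :
    l₁ = l₂ := by
  obtain ⟨p₁, s₁, rfl⟩ := List.append_of_mem hv₁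
  obtain ⟨p₂, s₂, rfl⟩ := List.append_of_mem hv₂
  rw [h₁.prefix_eq hpred h₂, h₁.suffix_eq hsucc h₂]

/-- Any two maximal paths sharing a vertex are equal; hence the maximal
paths of the graph are pairwise node-disjoint. -/
theorem maximal_paths_disjoint {V : Type*} (r : V → V → Prop) (t : V → ℕ)
    (hsucc : ∀ u v w, r u v → r u w → v = w)
    (hpred : ∀ u v w, r u w → r v w → u = v)
    (ht : ∀ u v, r u v → t v < t u)
    (l₁ l₂ : List V) (h₁ : IsMaxPath r l₁) (h₂ : IsMaxPath r l₂)
    (v : V) (hv₁ : v ∈ l₁) (hv₂ : v ∈ l₂) :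
    l₁ = l₂ :=
  maximal_paths_disjoint_general r hsucc hpred l₁ l₂ h₁ h₂ v hv₁ hv₂
end

section
/- Let l₁, …, l_k be nonempty, pairwise disjoint paths whose elements together exhaust V. Let r' be the relation r augmented with the connector edges from the last element of lᵢ to the first element of lᵢ₊₁ for each 1 ≤ i < k (modeling the prev-pointer assignments made by the recovery procedure when mending fragments). Then the concatenation L = l₁ ++ ⋯ ++ l_k satisfies r' aᵢ aᵢ₊₁ for all consecutive elements, and every vertex of V occurs exactly once in L; that is, after the fragments are linked there is a single path containing all nodes. -/
namespace List

variable {α : Type*} {k : ℕ} {ls : Fin k → List α}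

theorem isChain_flatten_ofFn {R : α → α → Prop} (hne : ∀ i, ls i ≠ [])
    (hchain : ∀ i, (ls i).IsChain R)
    (hlink : ∀ (i : Fin k) (hi : (i : ℕ) + 1 < k),
      ∀ x ∈ (ls i).getLast?, ∀ y ∈ (ls ⟨(i : ℕ) + 1, hi⟩).head?, R x y) :
    (ofFn ls).flatten.IsChain R := by
  have hnil : [] ∉ ofFn ls := fun h => by
    obtain ⟨i, hi⟩ := mem_ofFn.1 h
    exact hne i hi
  rw [isChain_flatten hnil, isChain_ofFn]
  exact ⟨forall_mem_ofFn_iff.2 hchain, fun i hi => hlink ⟨i, by omega⟩ hi⟩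

theorem nodup_flatten_ofFn (hnodup : ∀ i, (ls i).Nodup)
    (hdisj : ∀ i j, i ≠ j → Disjoint (ls i) (ls j)) :
    (ofFn ls).flatten.Nodup := by
  rw [nodup_flatten, pairwise_ofFn]
  exact ⟨forall_mem_ofFn_iff.2 hnodup, fun i j hij => hdisj i j hij.ne⟩

end List

/-- Mending the fragments: if `ls 0, …, ls (k-1)` are nonempty, pairwise
disjoint paths that together exhaust `V`, and `r'` is `r` augmented with the
connector edges from the last element of each fragment to the first element
of the next, then the concatenation of all fragments is a single path
(consecutive elements are `r'`-related) containing every vertex of `V`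
exactly once. -/
theorem mended_fragments_form_single_path {V : Type*} [DecidableEq V]
    (r : V → V → Prop) (k : ℕ) (ls : Fin k → List V)
    (hpath : ∀ i, IsPath r (ls i))
    (hdisj : ∀ i j, i ≠ j → ∀ v, v ∈ ls i → v ∉ ls j)
    (hexh : ∀ v : V, ∃ i, v ∈ ls i)
    (r' : V → V → Prop)
    (hr' : ∀ u v, r' u v ↔ r u v ∨
      ∃ i : Fin k, ∃ hi : (i : ℕ) + 1 < k,
        (ls i).getLast? = some u ∧ (ls ⟨(i : ℕ) + 1, hi⟩).head? = some v) :
    ((List.ofFn ls).flatten).Chain' r' ∧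
      ∀ v : V, ((List.ofFn ls).flatten).count v = 1 := by
  have hchain : (List.ofFn ls).flatten.IsChain r' :=
    List.isChain_flatten_ofFn (fun i => (hpath i).1)
      (fun i => (hpath i).2.2.imp fun u v h => (hr' u v).2 (.inl h))
      (fun i hi x hx y hy => (hr' x y).2 (.inr ⟨i, hi, hx, hy⟩))
  have hnodup : (List.ofFn ls).flatten.Nodup :=
    List.nodup_flatten_ofFn (fun i => (hpath i).2.1) fun i j hij _ => hdisj i j hij _
  refine ⟨hchain, fun v => List.count_eq_one_of_mem hnodup ?_⟩
  obtain ⟨i, hi⟩ := hexh v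
  exact List.mem_flatten.2 ⟨ls i, List.mem_ofFn.2 ⟨i, rfl⟩, hi⟩
end
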